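/- arXiv:1911.03715 — 10 statements merged into one kernel-verified Lean document; each statement's English description precedes it below -/
import Mathlib

section
/- Let M, X, Y be m×m complex matrices satisfying M·X = X, Y·M = Y, and M·Y = X·M. Then rank(X − Y) = rank(colBlock(X, Y)) + rank(rowBlock(X, Y)) − rank(X) − rank(Y), where colBlock(X, Y) is the 2m×m block matrix with X stacked above Y and rowBlock(X, Y) is the m×2m block matrix with X placed to the left of Y. -/
/-!
Put `N = ker (X - Y) = {v | X v = Y v}`. The map `v ↦ X v` sends `N` into `range X ⊓ range Y`
with kernel `ker X ⊓ ker Y`, and the hypotheses make it onto: if `X a = Y b`, then `v = M b`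
satisfies `X v = M X a = X a` and `Y v = Y b`. Hence
`dim N = dim (range X ⊓ range Y) + dim (ker X ⊓ ker Y)`, and the claim follows from rank–nullity,
`ker [X; Y] = ker X ⊓ ker Y`, `range [X, Y] = range X ⊔ range Y` and Grassmann's formula.
-/

open Matrix LinearMap Module

namespace LinearMap

variable {K V W : Type*} [Field K] [AddCommGroup V] [Module K V] [AddCommGroup W] [Module K W]

theorem finrank_ker_sub_eq_of_le_map [FiniteDimensional K V] (f g : V →ₗ[K] W)
    (h : range f ⊓ range g ≤ (ker (f - g)).map f) :
    finrank K (ker (f - g)) =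
      finrank K (range f ⊓ range g : Submodule K W) +
        finrank K (ker f ⊓ ker g : Submodule K V) := by
  have hrange : range (f.domRestrict (ker (f - g))) = range f ⊓ range g := by
    refine (range_domRestrict _ _).trans (le_antisymm ?_ h)
    rintro _ ⟨v, hv, rfl⟩
    exact ⟨⟨v, rfl⟩, v, (sub_eq_zero.mp hv).symm⟩
  have hker : ker (f.domRestrict (ker (f - g))) =
      (ker f ⊓ ker g).comap (ker (f - g)).subtype := by
    ext ⟨v, hv⟩
    simp [sub_eq_zero.mp hv]
  have hle : ker f ⊓ ker g ≤ ker (f - g) := fun v hv => by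
    simp_all
  rw [← (f.domRestrict _).finrank_range_add_finrank_ker, hrange, hker,
    (Submodule.comapSubtypeEquivOfLe hle).finrank_eq]

end LinearMap

namespace Matrix

section

variable {R : Type*} {l m n : Type*} [Fintype n]

theorem ker_mulVecLin_fromRows [CommSemiring R] (A : Matrix l n R) (B : Matrix m n R) :
    ker (fromRows A B).mulVecLin = ker A.mulVecLin ⊓ ker B.mulVecLin := by
  ext v
  simp [funext_iff]

theorem range_mulVecLin_fromCols [CommSemiring R] [Fintype m] (A : Matrix l m R)
    (B : Matrix l n R) :
    range (fromCols A B).mulVecLin = range A.mulVecLin ⊔ range B.mulVecLin := by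
  have : (fromCols A B).mulVecLin =
      A.mulVecLin.coprod B.mulVecLin ∘ₗ (LinearEquiv.sumArrowLequivProdArrow m n R R).toLinearMap :=
    LinearMap.ext fun v => (fromCols_mulVec A B v).trans rfl
  rw [this, range_comp_of_range_eq_top _ (LinearEquiv.range _), range_coprod]

theorem mulVecLin_sub [CommRing R] (A B : Matrix m n R) :
    (A - B).mulVecLin = A.mulVecLin - B.mulVecLin :=
  LinearMap.ext (sub_mulVec A B)

theorem rank_add_finrank_ker_mulVecLin [Field R] (A : Matrix m n R) :
    A.rank + finrank R (ker A.mulVecLin) = Fintype.card n := by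
  rw [rank, finrank_range_add_finrank_ker, finrank_fintype_fun_eq_card]

end

variable {R n : Type*} [Fintype n] {M X Y : Matrix n n R}

theorem range_inf_range_le_map_ker_sub [CommRing R] (h1 : M * X = X) (h2 : Y * M = Y)
    (h3 : M * Y = X * M) :
    range X.mulVecLin ⊓ range Y.mulVecLin ≤
      (ker (X.mulVecLin - Y.mulVecLin)).map X.mulVecLin := by
  rintro _ ⟨⟨a, rfl⟩, b, hb⟩
  simp only [mulVecLin_apply] at hb ⊢
  have hX : X *ᵥ (M *ᵥ b) = X *ᵥ a := by
    rw [mulVec_mulVec, ← h3, ← mulVec_mulVec, hb, mulVec_mulVec, h1]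
  have hY : Y *ᵥ (M *ᵥ b) = X *ᵥ a := by
    rw [mulVec_mulVec, h2, hb]
  exact ⟨M *ᵥ b, by simp [hX, hY], hX⟩

theorem rank_sub_add_rank_add_rank_eq [Field R] (h1 : M * X = X) (h2 : Y * M = Y)
    (h3 : M * Y = X * M) :
    (X - Y).rank + X.rank + Y.rank = (fromRows X Y).rank + (fromCols X Y).rank := by
  have hXY := rank_add_finrank_ker_mulVecLin (X - Y)
  rw [mulVecLin_sub, finrank_ker_sub_eq_of_le_map X.mulVecLin Y.mulVecLin
    (range_inf_range_le_map_ker_sub h1 h2 h3)] at hXY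
  have hX := rank_add_finrank_ker_mulVecLin X
  have hY := rank_add_finrank_ker_mulVecLin Y
  have hRows := rank_add_finrank_ker_mulVecLin (fromRows X Y)
  rw [ker_mulVecLin_fromRows] at hRows
  have hCols : (fromCols X Y).rank =
      finrank R (range X.mulVecLin ⊔ range Y.mulVecLin : Submodule R (n → R)) := by
    rw [rank, range_mulVecLin_fromCols]
  have hGrassmann :=
    Submodule.finrank_sup_add_finrank_inf_eq (range X.mulVecLin) (range Y.mulVecLin)
  rw [← rank, ← rank] at hGrassmann
  omega

end Matrix

/-- If `M * X = X`, `Y * M = Y` and `M * Y = X * M`, then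
`rank (X - Y) = rank [X; Y] + rank [X, Y] - rank X - rank Y`. -/
theorem stmt_0 (m : ℕ) (M X Y : Matrix (Fin m) (Fin m) ℂ)
    (h1 : M * X = X) (h2 : Y * M = Y) (h3 : M * Y = X * M) :
    ((X - Y).rank : ℤ) =
      ((Matrix.fromRows X Y).rank : ℤ) + ((Matrix.fromCols X Y).rank : ℤ)
        - (X.rank : ℤ) - (Y.rank : ℤ) := by
  have := rank_sub_add_rank_add_rank_eq h1 h2 h3
  omega
end

section
/- Let A, B, X, Y be m×m complex matrices satisfying A·X = X, Y·B = Y, and A·Y = X·B. Then rank(X − Y) = rank(colBlock(X, Y)) + rank(rowBlock(X, Y)) − rank(X) − rank(Y). -/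
/-!
Write `f, g` for the maps `v ↦ X v`, `v ↦ Y v`. Restricting `f` to the equalizer
`E = ker (f - g)` gives a map with kernel `ker f ⊓ ker g` whose image always lies in
`range f ⊓ range g`. The hypotheses make it onto: if `w = X u = Y t`, then `v = B t`
satisfies `Y v = Y t = w` and `X v = A Y t = A X u = w`. Hence
`dim E = dim (range f ⊓ range g) + dim (ker f ⊓ ker g)`, and the rank formula follows from
rank–nullity for `X - Y` and `[X; Y]` together with the dimension formula for
`range f ⊔ range g = range [X, Y]`.
-/

open Matrix Module Submodule LinearMap

section Equalizer

variable {K V W : Type*} [DivisionRing K] [AddCommGroup V] [Module K V] [AddCommGroup W]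
  [Module K W] [FiniteDimensional K V]

theorem LinearMap.finrank_ker_sub_eq_finrank_map_add (f g : V →ₗ[K] W) :
    finrank K (ker (f - g)) = finrank K ((ker (f - g)).map f) + finrank K ↥(ker f ⊓ ker g) := by
  have hker :
      (ker f).comap (ker (f - g)).subtype = (ker f ⊓ ker g).comap (ker (f - g)).subtype := by
    ext ⟨v, hv⟩
    rw [mem_ker, sub_apply, sub_eq_zero] at hv
    simp [hv]
  have hle : ker f ⊓ ker g ≤ ker (f - g) := fun v ⟨hfv, hgv⟩ ↦ by
    rw [mem_ker, sub_apply, mem_ker.mp hfv, mem_ker.mp hgv, sub_zero]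
  rw [← (f.domRestrict _).finrank_range_add_finrank_ker, range_domRestrict, ker_domRestrict,
    hker, (comapSubtypeEquivOfLe hle).finrank_eq]

theorem LinearMap.finrank_range_sub_add_finrank_range_add_finrank_range
    (f g : V →ₗ[K] W) (h : range f ⊓ range g ≤ (ker (f - g)).map f) :
    finrank K (range (f - g)) + finrank K (range f) + finrank K (range g)
      + finrank K ↥(ker f ⊓ ker g) = finrank K V + finrank K ↥(range f ⊔ range g) := by
  have hmap : (ker (f - g)).map f = range f ⊓ range g := by
    refine le_antisymm (le_inf LinearMap.map_le_range ?_) h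
    rintro _ ⟨v, hv, rfl⟩
    rw [SetLike.mem_coe, mem_ker, sub_apply, sub_eq_zero] at hv
    exact hv ▸ mem_range_self g v
  have hE := finrank_ker_sub_eq_finrank_map_add f g
  have hsub := (f - g).finrank_range_add_finrank_ker
  have hsup := Submodule.finrank_sup_add_finrank_inf_eq (range f) (range g)
  rw [hmap] at hE
  omega

end Equalizer

namespace Matrix

variable {R K m n m₁ m₂ n₁ n₂ : Type*}

theorem mulVecLin_sub_s1 [CommRing R] [Fintype n] (M N : Matrix m n R) :
    (M - N).mulVecLin = M.mulVecLin - N.mulVecLin :=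
  LinearMap.ext fun _ ↦ sub_mulVec _ _ _

theorem ker_mulVecLin_fromRows_s1 [CommSemiring R] [Fintype n]
    (A₁ : Matrix m₁ n R) (A₂ : Matrix m₂ n R) :
    ker (fromRows A₁ A₂).mulVecLin = ker A₁.mulVecLin ⊓ ker A₂.mulVecLin := by
  ext v
  simp only [mem_ker, Submodule.mem_inf, mulVecLin_apply, fromRows_mulVec,
    ← Sum.elim_zero_zero, Sum.elim_eq_iff]

theorem range_mulVecLin_fromCols_s1 [CommSemiring R] [Fintype n₁] [Fintype n₂]
    (A₁ : Matrix m n₁ R) (A₂ : Matrix m n₂ R) :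
    range (fromCols A₁ A₂).mulVecLin = range A₁.mulVecLin ⊔ range A₂.mulVecLin := by
  ext w
  simp only [mem_range, Submodule.mem_sup, mulVecLin_apply]
  constructor
  · rintro ⟨v, rfl⟩
    exact ⟨_, ⟨v ∘ Sum.inl, rfl⟩, _, ⟨v ∘ Sum.inr, rfl⟩, (fromCols_mulVec _ _ _).symm⟩
  · rintro ⟨_, ⟨v₁, rfl⟩, _, ⟨v₂, rfl⟩, rfl⟩
    exact ⟨Sum.elim v₁ v₂, fromCols_mulVec_sumElim _ _ _ _⟩

variable [Fintype m] [Fintype n]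

theorem range_inf_range_le_map_ker_sub_s1 [CommRing R] {A : Matrix m m R} {B : Matrix n n R}
    {X Y : Matrix m n R} (hAX : A * X = X) (hYB : Y * B = Y) (hAY : A * Y = X * B) :
    range X.mulVecLin ⊓ range Y.mulVecLin
      ≤ (ker (X.mulVecLin - Y.mulVecLin)).map X.mulVecLin := by
  rintro w ⟨⟨u, hu⟩, ⟨t, ht⟩⟩
  simp only [mulVecLin_apply] at hu ht
  have hX : X *ᵥ (B *ᵥ t) = w := by
    rw [mulVec_mulVec, ← hAY, ← mulVec_mulVec, ht, ← hu, mulVec_mulVec, hAX]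
  have hY : Y *ᵥ (B *ᵥ t) = w := by
    rw [mulVec_mulVec, hYB, ht]
  exact ⟨B *ᵥ t, by simp [hX, hY], hX⟩

theorem rank_sub_add_rank_add_rank [Field K] {A : Matrix m m K} {B : Matrix n n K}
    {X Y : Matrix m n K} (hAX : A * X = X) (hYB : Y * B = Y) (hAY : A * Y = X * B) :
    (X - Y).rank + X.rank + Y.rank = (fromRows X Y).rank + (fromCols X Y).rank := by
  have key := finrank_range_sub_add_finrank_range_add_finrank_range X.mulVecLin Y.mulVecLin
    (range_inf_range_le_map_ker_sub_s1 hAX hYB hAY)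
  have hRows := (fromRows X Y).mulVecLin.finrank_range_add_finrank_ker
  rw [ker_mulVecLin_fromRows_s1, finrank_fintype_fun_eq_card] at hRows
  rw [← mulVecLin_sub_s1, finrank_fintype_fun_eq_card] at key
  rw [rank, rank, rank, rank, rank, range_mulVecLin_fromCols_s1]
  omega

end Matrix

/-- If `A * X = X`, `Y * B = Y` and `A * Y = X * B`, then
`rank (X - Y) = rank [X; Y] + rank [X, Y] - rank X - rank Y`. -/
theorem stmt_1 (m : ℕ) (A B X Y : Matrix (Fin m) (Fin m) ℂ)
    (h1 : A * X = X) (h2 : Y * B = Y) (h3 : A * Y = X * B) :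
    ((X - Y).rank : ℤ) =
      ((Matrix.fromRows X Y).rank : ℤ) + ((Matrix.fromCols X Y).rank : ℤ)
        - (X.rank : ℤ) - (Y.rank : ℤ) := by
  have := rank_sub_add_rank_add_rank h1 h2 h3
  omega
end

section
/- Let A, B be m×m complex matrices, let X be an m×n complex matrix and Y an m×p complex matrix satisfying A·X = X, B·Y = Y, range(A·Y) ⊆ range(X), and range(B·X) ⊆ range(Y). Then rank(rowBlock(A·Y, B·X)) = rank(rowBlock(X, Y)) + rank(A·Y) + rank(B·X) − rank(X) − rank(Y). -/
/-!
By Grassmann's formula, `rank [U, V] = rank U + rank V - dim (range U ∩ range V)`. Applied to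
`[A Y, B X]` and to `[X, Y]`, the theorem reduces to `range (A Y) ∩ range (B X) = range X ∩ range Y`:
one inclusion is the range hypotheses, the other uses `A X = X` and `B Y = Y`.
-/

open Matrix

namespace Matrix

variable {R K : Type*} {m n p : Type*}

theorem range_mulVecLin_fromCols_s2 [CommSemiring R] [Fintype n] [Fintype p]
    (X : Matrix m n R) (Y : Matrix m p R) :
    LinearMap.range (fromCols X Y).mulVecLin =
      LinearMap.range X.mulVecLin ⊔ LinearMap.range Y.mulVecLin := by
  simp only [range_mulVecLin, ← Submodule.span_union, ← Set.Sum.elim_range]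
  congr 2
  ext (i | i) <;> rfl

theorem rank_fromCols_add_finrank_inf [Field K] [Fintype m] [Fintype n] [Fintype p]
    (X : Matrix m n K) (Y : Matrix m p K) :
    (fromCols X Y).rank +
        Module.finrank K ↥(LinearMap.range X.mulVecLin ⊓ LinearMap.range Y.mulVecLin) =
      X.rank + Y.rank := by
  rw [rank, range_mulVecLin_fromCols_s2]
  exact Submodule.finrank_sup_add_finrank_inf_eq _ _

/-- A vector `X u = Y w` in both ranges is `A X u = A Y w` and `B Y w = B X u`. -/
theorem range_inf_le_range_mul_inf [CommSemiring R] [Fintype m] [Fintype n] [Fintype p]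
    {A B : Matrix m m R} {X : Matrix m n R} {Y : Matrix m p R}
    (hA : A * X = X) (hB : B * Y = Y) :
    LinearMap.range X.mulVecLin ⊓ LinearMap.range Y.mulVecLin ≤
      LinearMap.range (A * Y).mulVecLin ⊓ LinearMap.range (B * X).mulVecLin := by
  rintro v ⟨⟨u, rfl⟩, ⟨w, hw⟩⟩
  simp only [mulVecLin_apply] at hw ⊢
  refine ⟨⟨w, ?_⟩, ⟨u, ?_⟩⟩
  · rw [mulVecLin_apply, ← mulVec_mulVec, hw, mulVec_mulVec, hA]
  · rw [mulVecLin_apply, ← mulVec_mulVec, ← hw, mulVec_mulVec, hB]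

end Matrix

/-- If `A * X = X`, `B * Y = Y`, `range (A*Y) ⊆ range X` and
`range (B*X) ⊆ range Y`, then
`rank [A*Y, B*X] = rank [X, Y] + rank (A*Y) + rank (B*X) - rank X - rank Y`. -/
theorem stmt_2 (m n p : ℕ) (A B : Matrix (Fin m) (Fin m) ℂ)
    (X : Matrix (Fin m) (Fin n) ℂ) (Y : Matrix (Fin m) (Fin p) ℂ)
    (h1 : A * X = X) (h2 : B * Y = Y)
    (h3 : LinearMap.range (A * Y).mulVecLin ≤ LinearMap.range X.mulVecLin)
    (h4 : LinearMap.range (B * X).mulVecLin ≤ LinearMap.range Y.mulVecLin) :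
    ((Matrix.fromCols (A * Y) (B * X)).rank : ℤ) =
      ((Matrix.fromCols X Y).rank : ℤ) + ((A * Y).rank : ℤ) + ((B * X).rank : ℤ)
        - (X.rank : ℤ) - (Y.rank : ℤ) := by
  have hinf : LinearMap.range (A * Y).mulVecLin ⊓ LinearMap.range (B * X).mulVecLin =
      LinearMap.range X.mulVecLin ⊓ LinearMap.range Y.mulVecLin :=
    le_antisymm (inf_le_inf h3 h4) (range_inf_le_range_mul_inf h1 h2)
  have hmul := rank_fromCols_add_finrank_inf (A * Y) (B * X)
  have hXY := rank_fromCols_add_finrank_inf X Y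
  rw [hinf] at hmul
  omega
end

section
/- Let A and B be m×m complex idempotent matrices (A² = A, B² = B) and let k ≥ 1 be an integer. Then rank(rowBlock((A·B)^k·A, (B·A)^k·B)) = rank(rowBlock(A, B)) + rank((A·B)^k·A) + rank((B·A)^k·B) − rank(A) − rank(B). -/
/-!
For any matrices `X`, `Y` with the same rows, the dimension formula for a sum of subspaces gives
`rank [X, Y] = rank X + rank Y - dim (col X ∩ col Y)`. Since `(AB)^k A = A (BA)^k` and
`(BA)^k B = B (AB)^k`, the column spaces of these two products lie in those of `A` and `B`;
conversely a vector of `col A ∩ col B` is fixed by both projections, hence by both products.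
So the two intersections coincide, and the identity is the difference of the two dimension formulas.
-/

open Matrix LinearMap

theorem LinearMap.range_mul_pow_mul_inf_eq_of_isIdempotentElem {R M : Type*} [Semiring R]
    [AddCommMonoid M] [Module R M] {f g : Module.End R M} (hf : IsIdempotentElem f)
    (hg : IsIdempotentElem g) (k : ℕ) :
    range ((f * g) ^ k * f) ⊓ range ((g * f) ^ k * g) = range f ⊓ range g := by
  refine le_antisymm (inf_le_inf ?_ ?_) ?_
  · rw [mul_pow_mul]
    exact range_comp_le_range _ _
  · rw [mul_pow_mul]
    exact range_comp_le_range _ _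
  rintro x ⟨hxf, hxg⟩
  -- `x` is fixed by `f` and `g`, hence by the whole monoid they generate.
  have hfx : f ∈ MulAction.stabilizerSubmonoid (Module.End R M) x :=
    (IsIdempotentElem.mem_range_iff hf).mp hxf
  have hgx : g ∈ MulAction.stabilizerSubmonoid (Module.End R M) x :=
    (IsIdempotentElem.mem_range_iff hg).mp hxg
  have fixed {h : Module.End R M} (hh : h ∈ MulAction.stabilizerSubmonoid (Module.End R M) x) :
      x ∈ range h :=
    ⟨x, hh⟩
  exact ⟨fixed (mul_mem (pow_mem (mul_mem hfx hgx) k) hfx),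
    fixed (mul_mem (pow_mem (mul_mem hgx hfx) k) hgx)⟩

theorem Matrix.range_mulVecLin_mul_pow_mul_inf_eq_of_isIdempotentElem {R n : Type*}
    [CommSemiring R] [Fintype n] [DecidableEq n] {A B : Matrix n n R} (hA : IsIdempotentElem A)
    (hB : IsIdempotentElem B) (k : ℕ) :
    range ((A * B) ^ k * A).mulVecLin ⊓ range ((B * A) ^ k * B).mulVecLin =
      range A.mulVecLin ⊓ range B.mulVecLin := by
  have h := range_mul_pow_mul_inf_eq_of_isIdempotentElem (hA.map toLinAlgEquiv')
    (hB.map toLinAlgEquiv') k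
  simp only [← map_mul, ← map_pow] at h
  exact h

theorem Matrix.range_mulVecLin_fromCols_s4 {R l m n : Type*} [CommSemiring R] [Fintype m]
    [Fintype n] (A : Matrix l m R) (B : Matrix l n R) :
    range (fromCols A B).mulVecLin = range A.mulVecLin ⊔ range B.mulVecLin := by
  ext x
  rw [Submodule.mem_sup]
  constructor
  · rintro ⟨v, rfl⟩
    refine ⟨A *ᵥ (v ∘ Sum.inl), ⟨_, rfl⟩, B *ᵥ (v ∘ Sum.inr), ⟨_, rfl⟩, ?_⟩
    rw [mulVecLin_apply, ← fromCols_mulVec_sumElim, Sum.elim_comp_inl_inr]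
  · rintro ⟨y, ⟨u, rfl⟩, z, ⟨v, rfl⟩, rfl⟩
    exact ⟨Sum.elim u v, by simp⟩

theorem Matrix.rank_fromCols_add_finrank_inf_s4 {K m n₁ n₂ : Type*} [Field K] [Fintype m]
    [Fintype n₁] [Fintype n₂] (A : Matrix m n₁ K) (B : Matrix m n₂ K) :
    (fromCols A B).rank + Module.finrank K ↥(range A.mulVecLin ⊓ range B.mulVecLin) =
      A.rank + B.rank := by
  rw [rank, range_mulVecLin_fromCols_s4]
  exact Submodule.finrank_sup_add_finrank_inf_eq _ _

theorem stmt_4_general (m : ℕ) (A B : Matrix (Fin m) (Fin m) ℂ)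
    (hA : A * A = A) (hB : B * B = B) (k : ℕ) :
    ((Matrix.fromCols ((A * B) ^ k * A) ((B * A) ^ k * B)).rank : ℤ) =
      ((Matrix.fromCols A B).rank : ℤ) + (((A * B) ^ k * A).rank : ℤ)
        + (((B * A) ^ k * B).rank : ℤ) - (A.rank : ℤ) - (B.rank : ℤ) := by
  have hpowers := rank_fromCols_add_finrank_inf_s4 ((A * B) ^ k * A) ((B * A) ^ k * B)
  have hprojections := rank_fromCols_add_finrank_inf_s4 A B
  rw [range_mulVecLin_mul_pow_mul_inf_eq_of_isIdempotentElem hA hB k] at hpowers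
  omega

/-- For idempotent `A`, `B` and `k ≥ 1`:
`rank [(AB)^k A, (BA)^k B] = rank [A, B] + rank ((AB)^k A) + rank ((BA)^k B) - rank A - rank B`. -/
theorem stmt_4 (m : ℕ) (A B : Matrix (Fin m) (Fin m) ℂ)
    (hA : A * A = A) (hB : B * B = B) (k : ℕ) (hk : 1 ≤ k) :
    ((Matrix.fromCols ((A * B) ^ k * A) ((B * A) ^ k * B)).rank : ℤ) =
      ((Matrix.fromCols A B).rank : ℤ) + (((A * B) ^ k * A).rank : ℤ)
        + (((B * A) ^ k * B).rank : ℤ) - (A.rank : ℤ) - (B.rank : ℤ) :=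
  stmt_4_general m A B hA hB k
end

section
/- Let A₁, A₂, …, A_k be m×m complex idempotent matrices (Aᵢ² = Aᵢ for all i). Let A denote the m×(km) block row matrix [A₁, A₂, …, A_k], and for each i let Âᵢ denote the m×(km) block row matrix obtained from A by replacing its i-th block by the zero matrix. Then rank of the m×(k²m) block row matrix [A₁·Â₁, A₂·Â₂, …, A_k·Â_k] equals rank(A₁·Â₁) + rank(A₂·Â₂) + ⋯ + rank(A_k·Â_k) + rank(A) − rank(A₁) − rank(A₂) − ⋯ − rank(A_k). -/
open Matrix

/-- A block row matrix `[M 0, M 1, …, M (k-1)]` of matrices with row index `Fin m`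
and column index `n`, realized with column index pairs `(j, l)`. -/
def blockRow {m k : ℕ} {n : Type*} (M : Fin k → Matrix (Fin m) n ℂ) :
    Matrix (Fin m) (Fin k × n) ℂ :=
  Matrix.of fun i p => M p.1 i p.2

section aux

variable {m k : ℕ} {n : Type*} [Fintype n]

lemma blockRow_mulVec (M : Fin k → Matrix (Fin m) n ℂ) (v : Fin k × n → ℂ) :
    blockRow M *ᵥ v = ∑ j, M j *ᵥ (fun l => v (j, l)) := by
  funext i
  simp only [Matrix.mulVec, dotProduct, blockRow, Matrix.of_apply, Finset.sum_apply,
    Fintype.sum_prod_type]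

/-- The linear map summing the components of a `Fin k`-tuple of vectors. -/
noncomputable def sumMap (m k : ℕ) : (Fin k → (Fin m → ℂ)) →ₗ[ℂ] (Fin m → ℂ) where
  toFun x := ∑ i, x i
  map_add' x y := by simp [Finset.sum_add_distrib]
  map_smul' c x := by simp [Finset.smul_sum]

lemma sumMap_apply (x : Fin k → (Fin m → ℂ)) : sumMap m k x = ∑ i, x i := rfl

/-- The column space of a block row is the image under the sum map of the
product of the column spaces of the blocks. -/
lemma range_blockRow (M : Fin k → Matrix (Fin m) n ℂ) :
    LinearMap.range (blockRow M).mulVecLin =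
      (Submodule.pi Set.univ fun i => LinearMap.range (M i).mulVecLin).map (sumMap m k) := by
  ext x
  constructor
  · rintro ⟨v, rfl⟩
    refine ⟨fun i => M i *ᵥ (fun l => v (i, l)), fun i _ => ⟨_, rfl⟩, ?_⟩
    rw [sumMap_apply, Matrix.mulVecLin_apply, blockRow_mulVec]
  · rintro ⟨y, hy, rfl⟩
    choose w hw using fun i => hy i (Set.mem_univ i)
    refine ⟨fun p => w p.1 p.2, ?_⟩
    rw [Matrix.mulVecLin_apply, blockRow_mulVec, sumMap_apply]
    exact Finset.sum_congr rfl fun j _ => hw j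

/-- A linear equivalence between `Submodule.pi Set.univ V` and the direct product. -/
noncomputable def piSubmoduleEquiv (V : Fin k → Submodule ℂ (Fin m → ℂ)) :
    (Submodule.pi Set.univ V) ≃ₗ[ℂ] ∀ i, V i where
  toFun x := fun i => ⟨x.1 i, x.2 i (Set.mem_univ i)⟩
  map_add' x y := rfl
  map_smul' c x := rfl
  invFun y := ⟨fun i => y i, fun i _ => (y i).2⟩
  left_inv x := rfl
  right_inv y := rfl

lemma finrank_piSubmodule (V : Fin k → Submodule ℂ (Fin m → ℂ)) :
    Module.finrank ℂ (Submodule.pi Set.univ V) = ∑ i, Module.finrank ℂ (V i) := by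
  rw [(piSubmoduleEquiv V).finrank_eq, Module.finrank_pi_fintype]

set_option synthInstance.maxHeartbeats 1000000 in
/-- Rank–nullity for a submodule mapped by a linear map. -/
lemma finrank_eq_map_add_inf_ker (P : Submodule ℂ (Fin k → (Fin m → ℂ)))
    (S : (Fin k → (Fin m → ℂ)) →ₗ[ℂ] (Fin m → ℂ)) :
    Module.finrank ℂ P =
      Module.finrank ℂ (P.map S) + Module.finrank ℂ ↥(P ⊓ LinearMap.ker S) := by
  have h := LinearMap.finrank_range_add_finrank_ker (S.comp P.subtype)
  rw [LinearMap.range_comp, Submodule.range_subtype] at h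
  have hker : LinearMap.ker (S.comp P.subtype) =
      Submodule.comap P.subtype (P ⊓ LinearMap.ker S) := by
    rw [LinearMap.ker_comp, Submodule.comap_inf]
    simp [Submodule.comap_subtype_self]
  rw [hker] at h
  have he : Module.finrank ℂ ↥(Submodule.comap P.subtype (P ⊓ LinearMap.ker S)) =
      Module.finrank ℂ ↥(P ⊓ LinearMap.ker S) :=
    (Submodule.comapSubtypeEquivOfLe (inf_le_left :
      P ⊓ LinearMap.ker S ≤ P)).finrank_eq
  omega

end aux

/-- For a family `A 0, …, A (k-1)` of `m × m` idempotent matrices, with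
`Â i` the block row `[A 0, …, A (i-1), 0, A (i+1), …, A (k-1)]`,
`rank [A 0 * Â 0, …, A (k-1) * Â (k-1)]
  = ∑ i, rank (A i * Â i) + rank [A 0, …, A (k-1)] - ∑ i, rank (A i)`. -/
theorem stmt_7 (m k : ℕ) (A : Fin k → Matrix (Fin m) (Fin m) ℂ)
    (hA : ∀ i, A i * A i = A i) :
    ((blockRow (fun i => A i * blockRow (fun j => if j = i then 0 else A j))).rank : ℤ) =
      (∑ i, ((A i * blockRow (fun j => if j = i then 0 else A j)).rank : ℤ))
        + ((blockRow A).rank : ℤ) - ∑ i, ((A i).rank : ℤ) := by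
  set B : Fin k → Matrix (Fin m) (Fin k × Fin m) ℂ :=
    fun i => A i * blockRow (fun j => if j = i then 0 else A j) with hB
  set S := sumMap m k with hS
  set PA : Submodule ℂ (Fin k → (Fin m → ℂ)) :=
    Submodule.pi Set.univ fun i => LinearMap.range (A i).mulVecLin with hPA
  set PB : Submodule ℂ (Fin k → (Fin m → ℂ)) :=
    Submodule.pi Set.univ fun i => LinearMap.range (B i).mulVecLin with hPB
  -- key equality of kernels
  have hkey : PA ⊓ LinearMap.ker S = PB ⊓ LinearMap.ker S := by
    ext x
    simp only [Submodule.mem_inf, hPA, hPB, Submodule.mem_pi, Set.mem_univ, forall_true_left,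
      LinearMap.mem_ker]
    constructor
    · rintro ⟨hx, hker⟩
      have hsum : ∑ j, x j = 0 := hker
      refine ⟨fun i => ?_, hker⟩
      -- x i is in the column space of B i
      choose u hu using hx
      refine ⟨fun p => -(u p.1 p.2), ?_⟩
      have hxi : A i *ᵥ x i = x i := by
        have hui := hu i
        rw [Matrix.mulVecLin_apply] at hui
        rw [← hui, Matrix.mulVec_mulVec, hA]
      rw [hB, Matrix.mulVecLin_apply, ← Matrix.mulVec_mulVec, blockRow_mulVec]
      have hterm : ∀ j, (if j = i then (0 : Matrix (Fin m) (Fin m) ℂ) else A j) *ᵥ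
          (fun l => -(u j l)) = if j = i then 0 else -(x j) := by
        intro j
        by_cases hji : j = i
        · simp [hji]
        · have huj := hu j
          rw [Matrix.mulVecLin_apply] at huj
          rw [if_neg hji, if_neg hji,
            show (fun l => -(u j l)) = -(u j) from rfl, Matrix.mulVec_neg, huj]
      rw [Finset.sum_congr rfl fun j _ => hterm j]
      have hsplit : (∑ j, if j = i then 0 else -(x j)) = x i := by
        have h1 : ∀ j ∈ Finset.univ.erase i,
            (if j = i then (0 : Fin m → ℂ) else -(x j)) = -(x j) :=
          fun j hj => if_neg (Finset.ne_of_mem_erase hj)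
        rw [← Finset.add_sum_erase _ _ (Finset.mem_univ i), Finset.sum_congr rfl h1,
          if_pos rfl, zero_add, Finset.sum_neg_distrib,
          Finset.sum_erase_eq_sub (Finset.mem_univ i), hsum]
        simp
      rw [hsplit, hxi]
    · rintro ⟨hx, hker⟩
      refine ⟨fun i => ?_, hker⟩
      obtain ⟨v, hv⟩ := hx i
      rw [hB, Matrix.mulVecLin_apply, ← Matrix.mulVec_mulVec] at hv
      exact ⟨_, hv⟩
  -- rank computations
  have hrankA : ∀ i, (A i).rank = Module.finrank ℂ (LinearMap.range (A i).mulVecLin) :=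
    fun i => rfl
  have hrankB : ∀ i, (B i).rank = Module.finrank ℂ (LinearMap.range (B i).mulVecLin) :=
    fun i => rfl
  have hA' : ∑ i, (A i).rank = Module.finrank ℂ (PA.map S) +
      Module.finrank ℂ ↥(PA ⊓ LinearMap.ker S) := by
    rw [← finrank_eq_map_add_inf_ker, hPA, finrank_piSubmodule]
    exact Finset.sum_congr rfl fun i _ => hrankA i
  have hB' : ∑ i, (B i).rank = Module.finrank ℂ (PB.map S) +
      Module.finrank ℂ ↥(PB ⊓ LinearMap.ker S) := by
    rw [← finrank_eq_map_add_inf_ker, hPB, finrank_piSubmodule]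
    exact Finset.sum_congr rfl fun i _ => hrankB i
  have hblockA : (blockRow A).rank = Module.finrank ℂ (PA.map S) := by
    rw [Matrix.rank, range_blockRow]
  have hblockB : (blockRow B).rank = Module.finrank ℂ (PB.map S) := by
    rw [Matrix.rank, range_blockRow]
  rw [hkey] at hA'
  have h1 : ((blockRow B).rank : ℤ) + (Module.finrank ℂ ↥(PB ⊓ LinearMap.ker S) : ℤ)
      = ∑ i, ((B i).rank : ℤ) := by
    rw [hblockB, ← Nat.cast_add, ← hB', Nat.cast_sum]
  have h2 : ((blockRow A).rank : ℤ) + (Module.finrank ℂ ↥(PB ⊓ LinearMap.ker S) : ℤ)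
      = ∑ i, ((A i).rank : ℤ) := by
    rw [hblockA, ← Nat.cast_add, ← hA', Nat.cast_sum]
  linarith [h1, h2]
end

section
/- Let A and B be m×m complex idempotent matrices (A² = A, B² = B). Then rank((A − B)²) = rank(A + B) + rank(2·I − A − B) − m, and rank(A·B + B·A) = rank(I − A − B) + rank(A + B) − m, where I is the m×m identity matrix. -/
open Matrix

lemma aux_rank_neg {m : ℕ} (M : Matrix (Fin m) (Fin m) ℂ) : (-M).rank = M.rank := by
  have h : (-M).mulVecLin = -(M.mulVecLin) := by
    ext v i
    simp [Matrix.neg_mulVec]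
  unfold Matrix.rank
  rw [h, LinearMap.range_neg]

lemma aux_rank_mul {m : ℕ} (X Y : Matrix (Fin m) (Fin m) ℂ)
    (hc : X * Y = Y * X) (hu : IsUnit (X + Y)) :
    ((X * Y).rank : ℤ) = X.rank + Y.rank - m := by
  obtain ⟨u, huu⟩ := hu
  set S : Matrix (Fin m) (Fin m) ℂ := X + Y with hS
  set C : Matrix (Fin m) (Fin m) ℂ := ↑u⁻¹ with hC
  have hSC : S * C = 1 := by rw [← huu, hC, ← Units.val_mul, mul_inv_cancel, Units.val_one]
  have hCS : C * S = 1 := by rw [← huu, hC, ← Units.val_mul, inv_mul_cancel, Units.val_one]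
  have hXS : X * S = S * X := by
    simp only [hS, mul_add, add_mul, hc]
  have hYS : Y * S = S * Y := by
    simp only [hS, mul_add, add_mul, hc]
  have hXC : X * C = C * X := by
    have h : C * X * S * C = C * S * X * C := by
      rw [mul_assoc C X S, hXS, ← mul_assoc]
    rw [mul_assoc (C * X) S C, hSC, mul_one, hCS, one_mul] at h
    exact h.symm
  have hYC : Y * C = C * Y := by
    have h : C * Y * S * C = C * S * Y * C := by
      rw [mul_assoc C Y S, hYS, ← mul_assoc]
    rw [mul_assoc (C * Y) S C, hSC, mul_one, hCS, one_mul] at h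
    exact h.symm
  have h_inf : LinearMap.ker X.mulVecLin ⊓ LinearMap.ker Y.mulVecLin = ⊥ := by
    rw [Submodule.eq_bot_iff]
    rintro v ⟨hv1, hv2⟩
    have h1 : X.mulVec v = 0 := hv1
    have h2 : Y.mulVec v = 0 := hv2
    have hv : S.mulVec v = 0 := by
      rw [hS, Matrix.add_mulVec, h1, h2, add_zero]
    calc v = (C * S).mulVec v := by rw [hCS, Matrix.one_mulVec]
    _ = C.mulVec (S.mulVec v) := by rw [Matrix.mulVec_mulVec]
    _ = 0 := by rw [hv, Matrix.mulVec_zero]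
  have h_sup : LinearMap.ker (X * Y).mulVecLin
      = LinearMap.ker X.mulVecLin ⊔ LinearMap.ker Y.mulVecLin := by
    apply le_antisymm
    · intro v hv
      have hv' : (X * Y).mulVec v = 0 := hv
      rw [Submodule.mem_sup]
      refine ⟨C.mulVec (Y.mulVec v), ?_, C.mulVec (X.mulVec v), ?_, ?_⟩
      · show X.mulVec _ = 0
        rw [Matrix.mulVec_mulVec, Matrix.mulVec_mulVec, hXC, mul_assoc,
          ← Matrix.mulVec_mulVec, hv', Matrix.mulVec_zero]
      · show Y.mulVec _ = 0
        rw [Matrix.mulVec_mulVec, Matrix.mulVec_mulVec, hYC, mul_assoc, ← hc,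
          ← Matrix.mulVec_mulVec, hv', Matrix.mulVec_zero]
      · rw [Matrix.mulVec_mulVec, Matrix.mulVec_mulVec, ← Matrix.add_mulVec,
          ← mul_add, add_comm Y X, ← hS, hCS, Matrix.one_mulVec]
    · rw [sup_le_iff]
      constructor
      · intro v hv
        have h1 : X.mulVec v = 0 := hv
        show (X * Y).mulVec v = 0
        rw [hc, ← Matrix.mulVec_mulVec, h1, Matrix.mulVec_zero]
      · intro v hv
        have h2 : Y.mulVec v = 0 := hv
        show (X * Y).mulVec v = 0
        rw [← Matrix.mulVec_mulVec, h2, Matrix.mulVec_zero]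
  have hdim : Module.finrank ℂ (LinearMap.ker (X * Y).mulVecLin)
      = Module.finrank ℂ (LinearMap.ker X.mulVecLin)
        + Module.finrank ℂ (LinearMap.ker Y.mulVecLin) := by
    rw [h_sup, ← Submodule.finrank_sup_add_finrank_inf_eq, h_inf, finrank_bot, add_zero]
  have hrn : ∀ M : Matrix (Fin m) (Fin m) ℂ,
      M.rank + Module.finrank ℂ (LinearMap.ker M.mulVecLin) = m := by
    intro M
    have := LinearMap.finrank_range_add_finrank_ker M.mulVecLin
    rwa [Module.finrank_fin_fun] at this
  have h1 := hrn (X * Y)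
  have h2 := hrn X
  have h3 := hrn Y
  rw [hdim] at h1
  omega

/-- For `m × m` idempotent matrices `A`, `B`:
`rank (A - B)² = rank (A + B) + rank (2I - A - B) - m` and
`rank (AB + BA) = rank (I - A - B) + rank (A + B) - m`. -/
theorem stmt_11 (m : ℕ) (A B : Matrix (Fin m) (Fin m) ℂ)
    (hA : A * A = A) (hB : B * B = B) :
    ((((A - B) ^ 2).rank : ℤ) =
        ((A + B).rank : ℤ) + ((2 - A - B : Matrix (Fin m) (Fin m) ℂ).rank : ℤ) - m) ∧
    (((A * B + B * A).rank : ℤ) =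
        ((1 - A - B : Matrix (Fin m) (Fin m) ℂ).rank : ℤ) + ((A + B).rank : ℤ) - m) := by
  constructor
  · have he : (A + B) * (2 - A - B) = (A - B) ^ 2 := by
      have e1 : (A + B) * (2 - A - B)
          = 2 * A + 2 * B - A * A - A * B - B * A - B * B := by noncomm_ring
      have e2 : (A - B) ^ 2 = A * A - A * B - B * A + B * B := by noncomm_ring
      rw [e1, e2, hA, hB]
      noncomm_ring
    have hc : (A + B) * (2 - A - B) = (2 - A - B) * (A + B) := by noncomm_ring
    have hu : IsUnit ((A + B) + (2 - A - B)) := by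
      have : (A + B) + (2 - A - B) = (2 : Matrix (Fin m) (Fin m) ℂ) := by noncomm_ring
      have h2 : (2 : Matrix (Fin m) (Fin m) ℂ) = (2 : ℂ) • 1 := by
        rw [two_smul]; norm_num
      rw [this, h2, Matrix.isUnit_iff_isUnit_det, Matrix.det_smul, Matrix.det_one, mul_one]
      exact isUnit_iff_ne_zero.mpr (by norm_num)
    have := aux_rank_mul (A + B) (2 - A - B) hc hu
    rw [he] at this
    rw [this]
  · have he : (1 - A - B) * (A + B) = -(A * B + B * A) := by
      have e1 : (1 - A - B) * (A + B)
          = A + B - A * A - A * B - B * A - B * B := by noncomm_ring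
      rw [e1, hA, hB]
      noncomm_ring
    have hc : (1 - A - B) * (A + B) = (A + B) * (1 - A - B) := by noncomm_ring
    have hu : IsUnit ((1 - A - B) + (A + B)) := by
      have : (1 - A - B) + (A + B) = (1 : Matrix (Fin m) (Fin m) ℂ) := by noncomm_ring
      rw [this]; exact isUnit_one
    have := aux_rank_mul (1 - A - B) (A + B) hc hu
    rw [he, aux_rank_neg] at this
    rw [this]
end

section
/- Let A and B be m×m complex idempotent matrices (A² = A, B² = B) and let k ≥ 1 be an integer. Then (A·B − B·A)^k = (−1)^{k(k−1)/2}·(A − B)^k·(A + B − I)^k = (−1)^{k(k−1)/2}·(I − A − B)^k·(A − B)^k, and (A·B + B·A)^k = (A + B)^k·(A + B − I)^k = (A + B − I)^k·(A + B)^k. -/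
open Matrix

lemma pow_anti {R : Type*} [Ring R] (x y : R) (h : y * x = -(x * y)) :
    ∀ k : ℕ, y ^ k * x = (-1 : R) ^ k * (x * y ^ k) := by
  intro k
  induction k with
  | zero => simp
  | succ n ih =>
      rw [pow_succ, mul_assoc, h, mul_neg, ← mul_assoc, ih, pow_succ]
      simp [mul_assoc]

lemma anticomm_pow {R : Type*} [Ring R] (x y : R) (h : y * x = -(x * y)) :
    ∀ k : ℕ, (x * y) ^ k = (-1 : R) ^ (k * (k - 1) / 2) * (x ^ k * y ^ k) := by
  intro k
  induction k with
  | zero => simp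
  | succ n ih =>
      have hexp := Nat.triangle_succ n
      have hassoc : x ^ n * y ^ n * (x * y) = x ^ n * (y ^ n * x) * y := by
        noncomm_ring
      have hc := ((Commute.neg_one_left (x ^ n)).pow_left n).eq
      rw [pow_succ, ih, hexp, pow_add, mul_assoc ((-1:R) ^ (n * (n-1)/2)), hassoc,
        pow_anti x y h n, pow_succ x, pow_succ y, ← mul_assoc (x ^ n), ← hc]
      simp [mul_assoc]

/-- For `m × m` idempotent matrices `A`, `B` and `k ≥ 1`:
`(AB - BA)^k = (-1)^{k(k-1)/2} (A - B)^k (A + B - I)^k = (-1)^{k(k-1)/2} (I - A - B)^k (A - B)^k`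
and `(AB + BA)^k = (A + B)^k (A + B - I)^k = (A + B - I)^k (A + B)^k`. -/
theorem stmt_13 (m : ℕ) (A B : Matrix (Fin m) (Fin m) ℂ)
    (hA : A * A = A) (hB : B * B = B) (k : ℕ) (hk : 1 ≤ k) :
    ((A * B - B * A) ^ k =
        ((-1 : ℂ) ^ (k * (k - 1) / 2)) • ((A - B) ^ k * (A + B - 1) ^ k) ∧
      (A * B - B * A) ^ k =
        ((-1 : ℂ) ^ (k * (k - 1) / 2)) • ((1 - A - B) ^ k * (A - B) ^ k)) ∧
    ((A * B + B * A) ^ k = (A + B) ^ k * (A + B - 1) ^ k ∧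
      (A * B + B * A) ^ k = (A + B - 1) ^ k * (A + B) ^ k) := by
  set D := A - B with hD
  set E := A + B - 1 with hE
  have hDE : D * E = A * B - B * A := by
    have : D * E = A * A + A * B - B * A - B * B - A + B := by
      rw [hD, hE]; noncomm_ring
    rw [this, hA, hB]; abel
  have hED : E * D = -(D * E) := by
    have : E * D = A * A - A * B + B * A - B * B - A + B := by
      rw [hD, hE]; noncomm_ring
    rw [this, hA, hB, hDE]; abel
  have hsmul : ∀ (n : ℕ) (X : Matrix (Fin m) (Fin m) ℂ),
      ((-1 : ℂ) ^ n) • X = (-1 : Matrix (Fin m) (Fin m) ℂ) ^ n * X := by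
    intro n X
    rw [Algebra.smul_def, map_pow, map_neg]
    norm_num
  have h1 : (A * B - B * A) ^ k =
      ((-1 : ℂ) ^ (k * (k - 1) / 2)) • (D ^ k * E ^ k) := by
    rw [← hDE, anticomm_pow D E hED k, hsmul]
  have hED' : D * E = -(E * D) := by rw [hED, neg_neg]
  have h1' : (A * B - B * A) ^ k =
      ((-1 : ℂ) ^ (k * (k - 1) / 2)) • ((1 - A - B) ^ k * D ^ k) := by
    have hEex : (1 - A - B) = -E := by rw [hE]; abel
    rw [← hDE, hED', neg_pow, anticomm_pow E D hED' k, hEex, hsmul, neg_pow E]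
    simp only [← mul_assoc, ← pow_add]
    rw [Nat.add_comm]
  have hSE : (A + B) * E = A * B + B * A := by
    have : (A + B) * E = A * A + A * B + B * A + B * B - A - B := by
      rw [hE]; noncomm_ring
    rw [this, hA, hB]; abel
  have hES : E * (A + B) = A * B + B * A := by
    have : E * (A + B) = A * A + A * B + B * A + B * B - A - B := by
      rw [hE]; noncomm_ring
    rw [this, hA, hB]; abel
  have hc : Commute (A + B) E := by rw [Commute, SemiconjBy, hSE, hES]
  exact ⟨⟨h1, h1'⟩, by rw [← hSE, hc.mul_pow], by rw [← hES, hc.symm.mul_pow]⟩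
end

section
/- Let A and B be m×m complex idempotent matrices (A² = A, B² = B). Then the range of A·B − B·A equals the intersection of the range of A − B with the range of I − A − B, as subspaces of ℂᵐ. -/
open Matrix

/-- For `m × m` idempotent matrices `A`, `B`:
`range (AB - BA) = range (A - B) ∩ range (I - A - B)`. -/
theorem stmt_15 (m : ℕ) (A B : Matrix (Fin m) (Fin m) ℂ)
    (hA : A * A = A) (hB : B * B = B) :
    LinearMap.range (A * B - B * A).mulVecLin =
      LinearMap.range (A - B).mulVecLin ⊓
        LinearMap.range (1 - A - B : Matrix (Fin m) (Fin m) ℂ).mulVecLin := by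
  set P := A - B with hP
  set Q := (1 - A - B : Matrix (Fin m) (Fin m) ℂ) with hQ
  set C := A * B - B * A with hCdef
  have h2A : ∀ X : Matrix (Fin m) (Fin m) ℂ, A * (A * X) = A * X := fun X => by
    rw [← mul_assoc, hA]
  have h2B : ∀ X : Matrix (Fin m) (Fin m) ℂ, B * (B * X) = B * X := fun X => by
    rw [← mul_assoc, hB]
  have hQP : Q * P = C := by
    simp only [hP, hQ, hCdef, sub_mul, mul_sub, one_mul, mul_one, hA, hB, h2A, h2B]
    abel
  have hPQ : P * (-Q) = C := by
    simp only [hP, hQ, hCdef, mul_neg, sub_mul, mul_sub, one_mul, mul_one, hA, hB, h2A, h2B]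
    abel
  have hCP : C * P = P * (P * Q) := by
    simp only [hP, hQ, hCdef, sub_mul, mul_sub, one_mul, mul_one, hA, hB, h2A, h2B, mul_assoc]
    abel
  have hCQ : C * Q = -(Q * (Q * P)) := by
    simp only [hP, hQ, hCdef, sub_mul, mul_sub, one_mul, mul_one, hA, hB, h2A, h2B, mul_assoc]
    abel
  have hone : P * P + Q * Q = 1 := by
    simp only [hP, hQ, sub_mul, mul_sub, one_mul, mul_one, hA, hB, h2A, h2B]
    abel
  apply le_antisymm
  · rintro x ⟨u, rfl⟩
    refine ⟨⟨(-Q).mulVec u, ?_⟩, ⟨P.mulVec u, ?_⟩⟩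
    · simp [mulVec_mulVec, hPQ]
    · simp [mulVec_mulVec, hQP]
  · rintro x ⟨⟨u, hu⟩, ⟨v, hv⟩⟩
    refine ⟨P.mulVec v - Q.mulVec u, ?_⟩
    simp only [mulVecLin_apply] at hu hv ⊢
    rw [mulVec_sub, mulVec_mulVec, mulVec_mulVec, hCP, hCQ, ← mul_assoc, ← mul_assoc,
      neg_mulVec, sub_neg_eq_add, ← mulVec_mulVec, ← mulVec_mulVec, hv, ← mulVec_mulVec, hu, mulVec_mulVec,
      ← add_mulVec, hone, one_mulVec]
end

section
/- Let A and B be m×m complex idempotent matrices (A² = A, B² = B). Then, as subspaces of ℂᵐ: the range of A·B + B·A equals the intersection of the range of A + B with the range of A + B − I, and the range of A·B·A − B·A·B equals the intersection of the range of A − B with the range of (A + B − I)². -/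
open Matrix

/-- For `m × m` idempotent matrices `A`, `B`:
`range (AB + BA) = range (A + B) ∩ range (A + B - I)` and
`range (ABA - BAB) = range (A - B) ∩ range ((A + B - I)²)`. -/
theorem stmt_16 (m : ℕ) (A B : Matrix (Fin m) (Fin m) ℂ)
    (hA : A * A = A) (hB : B * B = B) :
    LinearMap.range (A * B + B * A).mulVecLin =
      LinearMap.range (A + B).mulVecLin ⊓ LinearMap.range (A + B - 1).mulVecLin ∧
    LinearMap.range (A * B * A - B * A * B).mulVecLin =
      LinearMap.range (A - B).mulVecLin ⊓ LinearMap.range ((A + B - 1) ^ 2).mulVecLin := by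
  -- Key algebraic identities
  have hST : (A + B) * (A + B - 1) = A * B + B * A := by
    have e : (A + B) * (A + B - 1) = (A*A - A) + (B*B - B) + (A*B + B*A) := by noncomm_ring
    rw [e, hA, hB]; abel
  have hTS : (A + B - 1) * (A + B) = A * B + B * A := by
    have e : (A + B - 1) * (A + B) = (A*A - A) + (B*B - B) + (A*B + B*A) := by noncomm_ring
    rw [e, hA, hB]; abel
  have hDT2 : (A - B) * (A + B - 1) ^ 2 = A * B * A - B * A * B := by
    have e : (A - B) * (A + B - 1) ^ 2 = (A*B*A - B*A*B)
        + (A*(A*A) - A) + (A*A*B - A*B) + (A*(B*B) - A*B) - 2*(A*A - A)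
        - (B*(A*A) - B*A) - (B*B*A - B*A) - (B*(B*B) - B) + 2*(B*B - B) := by noncomm_ring
    rw [e]; simp only [hA, hB]; abel
  have hT2D : (A + B - 1) ^ 2 * (A - B) = A * B * A - B * A * B := by
    have e : (A + B - 1) ^ 2 * (A - B) = (A*B*A - B*A*B)
        + (A*(A*A) - A) - (A*A*B - A*B) - (A*(B*B) - A*B) - 2*(A*A - A)
        + (B*(A*A) - B*A) + (B*B*A - B*A) - (B*(B*B) - B) + 2*(B*B - B) := by noncomm_ring
    rw [e]; simp only [hA, hB]; abel
  have hsum : (A - B) * (A - B) + (A + B - 1) ^ 2 = 1 := by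
    have e : (A - B) * (A - B) + (A + B - 1) ^ 2 = 2*(A*A - A) + 2*(B*B - B) + 1 := by
      noncomm_ring
    rw [e, hA, hB]; simp
  constructor
  · apply le_antisymm
    · rintro x ⟨w, rfl⟩
      rw [Submodule.mem_inf]
      constructor
      · exact ⟨(A + B - 1).mulVecLin w, by rw [← hST]; simp⟩
      · exact ⟨(A + B).mulVecLin w, by rw [← hTS]; simp⟩
    · intro x hx
      rw [Submodule.mem_inf] at hx
      obtain ⟨⟨u, hu⟩, ⟨v, hv⟩⟩ := hx
      refine ⟨v - u, ?_⟩
      have h1 : (A * B + B * A).mulVecLin v = (A + B).mulVecLin x := by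
        rw [← hST, ← hv]; simp
      have h2 : (A * B + B * A).mulVecLin u = (A + B - 1).mulVecLin x := by
        rw [← hTS, ← hu]; simp
      have h4 : (A + B) - (A + B - 1) = (1 : Matrix (Fin m) (Fin m) ℂ) := by abel
      have h3 : (A + B).mulVecLin x - (A + B - 1).mulVecLin x = x := by
        simp only [Matrix.mulVecLin_apply, ← Matrix.sub_mulVec, h4, Matrix.one_mulVec]
      rw [map_sub, h1, h2, h3]
  · apply le_antisymm
    · rintro x ⟨w, rfl⟩
      rw [Submodule.mem_inf]
      constructor
      · exact ⟨((A + B - 1) ^ 2).mulVecLin w, by rw [← hDT2]; simp⟩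
      · exact ⟨(A - B).mulVecLin w, by rw [← hT2D]; simp⟩
    · intro x hx
      rw [Submodule.mem_inf] at hx
      obtain ⟨⟨u, hu⟩, ⟨v, hv⟩⟩ := hx
      refine ⟨(A - B).mulVecLin v + u, ?_⟩
      have hcomm : ((A + B - 1) ^ 2).mulVecLin ((A - B).mulVecLin v)
          = (A - B).mulVecLin x := by
        have := congrArg (fun M : Matrix (Fin m) (Fin m) ℂ => M.mulVecLin v)
          (hT2D.trans hDT2.symm)
        simp only [Matrix.mulVecLin_mul, LinearMap.comp_apply] at this
        rw [this, hv]
      have h1 : (A * B * A - B * A * B).mulVecLin ((A - B).mulVecLin v)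
          = (A - B).mulVecLin ((A - B).mulVecLin x) := by
        rw [← hDT2]
        simp only [Matrix.mulVecLin_mul, LinearMap.comp_apply]
        rw [hcomm]
      have h2 : (A * B * A - B * A * B).mulVecLin u = ((A + B - 1) ^ 2).mulVecLin x := by
        rw [← hT2D, ← hu]; simp
      have h3 : (A - B).mulVecLin ((A - B).mulVecLin x) + ((A + B - 1) ^ 2).mulVecLin x
          = x := by
        simp only [Matrix.mulVecLin_apply, Matrix.mulVec_mulVec, ← Matrix.add_mulVec,
          hsum, Matrix.one_mulVec]
      rw [map_add, h1, h2, h3]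
end

section
/- Let A and B be m×m complex idempotent matrices (A² = A, B² = B), and let α, β be complex scalars with α ∉ {0, −1} and β ∉ {0, −1}. Set λ = α·β·(1+α)⁻¹·(1+β)⁻¹. Then I + α·A + β·B = (I + α·A)·(I − λ·A·B)·(I + β·B) = (I + β·B)·(I − λ·B·A)·(I + α·A); the matrices I + α·A and I + β·B are invertible; I − λ·A·B is invertible if and only if I + α·A + β·B is invertible; and in that case (I − λ·A·B)⁻¹ = (I + β·B)·(I + α·A + β·B)⁻¹·(I + α·A) and (I − λ·B·A)⁻¹ = (I + α·A)·(I + α·A + β·B)⁻¹·(I + β·B). -/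
open Matrix

section aux
variable {m : ℕ}

lemma aux_inv (A : Matrix (Fin m) (Fin m) ℂ) (hA : A * A = A) (α : ℂ)
    (h : (1:ℂ) + α ≠ 0) :
    (1 + α • A) * (1 - (α * (1+α)⁻¹) • A) = 1 ∧
    (1 - (α * (1+α)⁻¹) • A) * (1 + α • A) = 1 := by
  constructor <;>
  · simp only [mul_add, add_mul, mul_sub, sub_mul, mul_one, one_mul,
      smul_mul_assoc, mul_smul_comm, smul_smul, hA]
    match_scalars <;> field_simp <;> ring

lemma aux_factor (A B : Matrix (Fin m) (Fin m) ℂ)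
    (hA : A * A = A) (hB : B * B = B) (α β : ℂ)
    (hα : (1:ℂ) + α ≠ 0) (hβ : (1:ℂ) + β ≠ 0) :
    1 + α • A + β • B =
      (1 + α • A) * (1 - (α * β * (1 + α)⁻¹ * (1 + β)⁻¹) • (A * B)) * (1 + β • B) := by
  have hAAB : A * (A * B) = A * B := by rw [← Matrix.mul_assoc, hA]
  have hABB : A * B * B = A * B := by rw [Matrix.mul_assoc, hB]
  simp only [mul_add, add_mul, mul_sub, sub_mul, mul_one, one_mul,
    smul_mul_assoc, mul_smul_comm, smul_smul, hAAB, hABB, Matrix.mul_assoc]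
  match_scalars <;> field_simp <;> ring
end aux

/-- For `m × m` idempotent matrices `A`, `B` and scalars
`α ∉ {0, -1}`, `β ∉ {0, -1}`, with `λ = αβ(1+α)⁻¹(1+β)⁻¹`:
the two factorizations of `I + αA + βB` hold, `I + αA` and `I + βB` are invertible,
`I - λAB` is invertible iff `I + αA + βB` is, and in that case the stated formulas for
`(I - λAB)⁻¹` and `(I - λBA)⁻¹` hold. -/
theorem stmt_18 (m : ℕ) (A B : Matrix (Fin m) (Fin m) ℂ)
    (hA : A * A = A) (hB : B * B = B) (α β : ℂ)
    (hα0 : α ≠ 0) (hα1 : α ≠ -1) (hβ0 : β ≠ 0) (hβ1 : β ≠ -1) :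
    let lam : ℂ := α * β * (1 + α)⁻¹ * (1 + β)⁻¹
    (1 + α • A + β • B =
        (1 + α • A) * (1 - lam • (A * B)) * (1 + β • B) ∧
      1 + α • A + β • B =
        (1 + β • B) * (1 - lam • (B * A)) * (1 + α • A)) ∧
    IsUnit (1 + α • A) ∧ IsUnit (1 + β • B) ∧
    (IsUnit (1 - lam • (A * B)) ↔ IsUnit (1 + α • A + β • B)) ∧
    (IsUnit (1 + α • A + β • B) →
      (1 - lam • (A * B))⁻¹ = (1 + β • B) * (1 + α • A + β • B)⁻¹ * (1 + α • A) ∧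
      (1 - lam • (B * A))⁻¹ = (1 + α • A) * (1 + α • A + β • B)⁻¹ * (1 + β • B)) := by
  intro lam
  have h1α : (1:ℂ) + α ≠ 0 := fun h => hα1 (by linear_combination h)
  have h1β : (1:ℂ) + β ≠ 0 := fun h => hβ1 (by linear_combination h)
  have hlam : lam = α * β * (1 + α)⁻¹ * (1 + β)⁻¹ := rfl
  have hlam' : lam = β * α * (1 + β)⁻¹ * (1 + α)⁻¹ := by rw [hlam]; ring
  set U := 1 + α • A with hU
  set V := 1 + β • B with hV
  set X := 1 - lam • (A * B) with hX
  set Y := 1 - lam • (B * A) with hY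
  set S := 1 + α • A + β • B with hSdef
  obtain ⟨hU1, hU2⟩ := aux_inv A hA α h1α
  obtain ⟨hV1, hV2⟩ := aux_inv B hB β h1β
  set U' := 1 - (α * (1+α)⁻¹) • A with hU'
  set V' := 1 - (β * (1+β)⁻¹) • B with hV'
  rw [← hU] at hU1 hU2
  rw [← hV] at hV1 hV2
  have hfac1 : S = U * X * V := by
    rw [hSdef, hU, hX, hV, hlam]; exact aux_factor A B hA hB α β h1α h1β
  have hfac2 : S = V * Y * U := by
    have h := aux_factor B A hB hA β α h1β h1α
    rw [hSdef, hV, hY, hU, hlam']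
    rw [show (1:Matrix (Fin m) (Fin m) ℂ) + α • A + β • B
        = 1 + β • B + α • A from add_right_comm 1 (β • B) (α • A) ▸ rfl, h]
  have hUu : IsUnit U := ⟨⟨U, U', hU1, hU2⟩, rfl⟩
  have hU'u : IsUnit U' := ⟨⟨U', U, hU2, hU1⟩, rfl⟩
  have hVu : IsUnit V := ⟨⟨V, V', hV1, hV2⟩, rfl⟩
  have hV'u : IsUnit V' := ⟨⟨V', V, hV2, hV1⟩, rfl⟩
  have hXe : X = U' * S * V' := by
    rw [hfac1]
    calc X = (U' * U) * X * (V * V') := by rw [hU2, hV1, one_mul, mul_one]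
      _ = U' * (U * X * V) * V' := by simp only [Matrix.mul_assoc]
  have hYe : Y = V' * S * U' := by
    rw [hfac2]
    calc Y = (V' * V) * Y * (U * U') := by rw [hV2, hU1, one_mul, mul_one]
      _ = V' * (V * Y * U) * U' := by simp only [Matrix.mul_assoc]
  have hXS : IsUnit X ↔ IsUnit S := by
    constructor
    · intro hX'; rw [hfac1]; exact (hUu.mul hX').mul hVu
    · intro hS
      rw [hXe]
      exact (hU'u.mul hS).mul hV'u
  refine ⟨⟨hfac1, hfac2⟩, hUu, hVu, hXS, fun hS => ?_⟩
  have hSd : IsUnit S.det := (Matrix.isUnit_iff_isUnit_det S).mp hS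
  have hSS : S * S⁻¹ = 1 := Matrix.mul_nonsing_inv S hSd
  constructor
  · apply Matrix.inv_eq_right_inv
    rw [hXe]
    calc U' * S * V' * (V * S⁻¹ * U)
        = U' * ((S * ((V' * V) * S⁻¹)) * U) := by simp only [Matrix.mul_assoc]
      _ = 1 := by rw [hV2, one_mul, hSS, one_mul, hU2]
  · apply Matrix.inv_eq_right_inv
    rw [hYe]
    calc V' * S * U' * (U * S⁻¹ * V)
        = V' * ((S * ((U' * U) * S⁻¹)) * V) := by simp only [Matrix.mul_assoc]
      _ = 1 := by rw [hU2, one_mul, hSS, one_mul, hV2]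
end
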